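/- arXiv:2108.03776 — 2 statements merged into one kernel-verified Lean document; each statement's English description precedes it below -/
import Mathlib

section
/- Consider affine maps v⁺, v⁻ : ℝ² → ℝ² and constants q⁺, q⁻ ∈ ℝ satisfying: σ(1, ∇v⁺, q⁺) n − σ(1, ∇v⁻, q⁻) n = t; v⁺ = v⁻ at every point of [D,E]; tr ∇v⁺ = tr ∇v⁻; and all seven degrees of freedom vanish, N₁ = ⋯ = N₇ = 0. Then such a quadruple exists, is unique, and is given explicitly by q⁺ = q⁻ = 0, v⁺(x) = (⟨n, x − D⟩ − L(x)) t and v⁻(x) = −L(x) t, where L = π w is the Crouzeix–Raviart interpolant of w(x) = max(⟨n, x − D⟩, 0). -/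
open MeasureTheory

noncomputable section

namespace StokesIFE

/-- Euclidean inner product on `ℝ²`. -/
def dot (x y : Fin 2 → ℝ) : ℝ := x 0 * y 0 + x 1 * y 1

/-- Euclidean length of a vector of `ℝ²`. -/
def len (x : Fin 2 → ℝ) : ℝ := Real.sqrt (dot x x)

/-- Strain tensor `ε(A) = (A + Aᵀ)/2`. -/
def eps (A : Matrix (Fin 2) (Fin 2) ℝ) : Matrix (Fin 2) (Fin 2) ℝ :=
  (2⁻¹ : ℝ) • (A + A.transpose)

/-- Cauchy stress tensor `σ(μ, A, q) = 2 μ ε(A) − q I₂`. -/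
def sig (μ : ℝ) (A : Matrix (Fin 2) (Fin 2) ℝ) (q : ℝ) : Matrix (Fin 2) (Fin 2) ℝ :=
  (2 * μ) • eps A - q • (1 : Matrix (Fin 2) (Fin 2) ℝ)

/-- Mean value of `u` over the segment `[P, Q]` with respect to arclength,
expressed through the affine parametrization of the segment. -/
def edgeMean (P Q : Fin 2 → ℝ) (u : (Fin 2 → ℝ) → ℝ) : ℝ :=
  ∫ s in (0:ℝ)..1, u (P + s • (Q - P))

/-- Two-dimensional Lebesgue area of a subset of `ℝ²`. -/
def area (s : Set (Fin 2 → ℝ)) : ℝ := (volume s).toReal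

/-- Squared Frobenius norm of a 2×2 matrix. -/
def frobSq (A : Matrix (Fin 2) (Fin 2) ℝ) : ℝ := ∑ i : Fin 2, ∑ j : Fin 2, (A i j) ^ 2

/-- A triangle `T = conv{A₁, A₂, A₃}` cut by the segment `[D, E]`, where
`D` lies in the open edge `(A₂, A₃)`, `E` lies in the open edge `(A₁, A₃)`,
and `n` is the unit normal of `E − D` pointing towards `A₃`. -/
structure CutTriangle where
  A₁ : Fin 2 → ℝ
  A₂ : Fin 2 → ℝ
  A₃ : Fin 2 → ℝ
  D : Fin 2 → ℝ
  E : Fin 2 → ℝ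
  n : Fin 2 → ℝ
  indep : AffineIndependent ℝ ![A₁, A₂, A₃]
  hD : D ∈ openSegment ℝ A₂ A₃
  hE : E ∈ openSegment ℝ A₁ A₃
  hn_unit : dot n n = 1
  hn_orth : dot n (E - D) = 0
  hn_sign : 0 < dot n (A₃ - D)

namespace CutTriangle

variable (c : CutTriangle)

/-- Tangent vector `t = (n₂, −n₁)`, the rotation of `n` by `−π/2`. -/
def t : Fin 2 → ℝ := ![c.n 1, -(c.n 0)]

/-- The closed triangle. -/
def T : Set (Fin 2 → ℝ) := convexHull ℝ {c.A₁, c.A₂, c.A₃}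

/-- The part of the triangle on the `+` side of the cut. -/
def Tplus : Set (Fin 2 → ℝ) := c.T ∩ {x | 0 ≤ dot c.n (x - c.D)}

/-- The part of the triangle on the `−` side of the cut. -/
def Tminus : Set (Fin 2 → ℝ) := c.T ∩ {x | dot c.n (x - c.D) ≤ 0}

/-- The piecewise linear function `w(x) = max(⟨n, x − D⟩, 0)`. -/
def w (x : Fin 2 → ℝ) : ℝ := max (dot c.n (x - c.D)) 0

/-- `(g, b)` represents the Crouzeix–Raviart interpolant `x ↦ ⟨g, x⟩ + b` of `u` on `T`:
an affine map whose mean value over each of the three edges coincides with that of `u`. -/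
def IsCR (u : (Fin 2 → ℝ) → ℝ) (g : Fin 2 → ℝ) (b : ℝ) : Prop :=
  edgeMean c.A₂ c.A₃ (fun x => dot g x + b) = edgeMean c.A₂ c.A₃ u ∧
  edgeMean c.A₁ c.A₃ (fun x => dot g x + b) = edgeMean c.A₁ c.A₃ u ∧
  edgeMean c.A₁ c.A₂ (fun x => dot g x + b) = edgeMean c.A₁ c.A₂ u

/-- The componentwise Crouzeix–Raviart interpolant `x ↦ Mπ x + bπ` of a vector-valued `u`. -/
def IsCRvec (u : (Fin 2 → ℝ) → Fin 2 → ℝ) (Mπ : Matrix (Fin 2) (Fin 2) ℝ)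
    (bπ : Fin 2 → ℝ) : Prop :=
  ∀ j : Fin 2, c.IsCR (fun x => u x j) (Mπ j) (bπ j)

/-- The piecewise velocity: `x ↦ Mp x + bp` on the `+` side and `x ↦ Mm x + bm`
on the `−` side. -/
def vtilde (Mp : Matrix (Fin 2) (Fin 2) ℝ) (bp : Fin 2 → ℝ)
    (Mm : Matrix (Fin 2) (Fin 2) ℝ) (bm : Fin 2 → ℝ) (x : Fin 2 → ℝ) : Fin 2 → ℝ :=
  if 0 ≤ dot c.n (x - c.D) then Mp.mulVec x + bp else Mm.mulVec x + bm

/-- The seven local degrees of freedom: edge means of the two velocity components over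
the edges `e₁ = [A₂,A₃]`, `e₂ = [A₁,A₃]`, `e₃ = [A₁,A₂]`, and the mean of the
piecewise-constant pressure over `T`. -/
def dof (Mp : Matrix (Fin 2) (Fin 2) ℝ) (bp : Fin 2 → ℝ)
    (Mm : Matrix (Fin 2) (Fin 2) ℝ) (bm : Fin 2 → ℝ) (qp qm : ℝ) : Fin 7 → ℝ :=
  ![edgeMean c.A₂ c.A₃ (fun x => c.vtilde Mp bp Mm bm x 0),
    edgeMean c.A₁ c.A₃ (fun x => c.vtilde Mp bp Mm bm x 0),
    edgeMean c.A₁ c.A₂ (fun x => c.vtilde Mp bp Mm bm x 0),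
    edgeMean c.A₂ c.A₃ (fun x => c.vtilde Mp bp Mm bm x 1),
    edgeMean c.A₁ c.A₃ (fun x => c.vtilde Mp bp Mm bm x 1),
    edgeMean c.A₁ c.A₂ (fun x => c.vtilde Mp bp Mm bm x 1),
    (area c.Tplus * qp + area c.Tminus * qm) / area c.T]

/-- A local IFE pair: affine velocities `v± = Mp/Mm · x + bp/bm` and constant pressures
`q±` satisfying the stress-jump condition (J1), continuity of the velocity on `[D,E]` (J2)
and continuity of the divergence (J3). -/
def IsIFEPair (μp μm : ℝ) (Mp : Matrix (Fin 2) (Fin 2) ℝ) (bp : Fin 2 → ℝ)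
    (Mm : Matrix (Fin 2) (Fin 2) ℝ) (bm : Fin 2 → ℝ) (qp qm : ℝ) : Prop :=
  (sig μp Mp qp).mulVec c.n = (sig μm Mm qm).mulVec c.n ∧
  (∀ x ∈ segment ℝ c.D c.E, Mp.mulVec x + bp = Mm.mulVec x + bm) ∧
  Mp.trace = Mm.trace

/-- The diameter of the triangle (its longest edge). -/
def hT : ℝ := max (len (c.A₂ - c.A₁)) (max (len (c.A₃ - c.A₁)) (len (c.A₃ - c.A₂)))

/-- The perimeter of the triangle. -/
def perim : ℝ := len (c.A₂ - c.A₁) + len (c.A₃ - c.A₁) + len (c.A₃ - c.A₂)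

/-- The inradius of the triangle, `r_T = 2|T| / perimeter`. -/
def rT : ℝ := 2 * area c.T / c.perim

/-- `ϱ`-shape-regularity: `h_T ≤ ϱ r_T`. -/
def ShapeReg (ϱ : ℝ) : Prop := c.hT ≤ ϱ * c.rT

/-- Arclength of the part of the edge `[P,Q]` lying on the `+` side of the cut. -/
def edgeLenPlus (P Q : Fin 2 → ℝ) : ℝ :=
  len (Q - P) *
    (volume {s : ℝ | s ∈ Set.Icc (0:ℝ) 1 ∧ 0 ≤ dot c.n (P + s • (Q - P) - c.D)}).toReal

/-- Arclength of the part of the edge `[P,Q]` lying on the `−` side of the cut. -/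
def edgeLenMinus (P Q : Fin 2 → ℝ) : ℝ :=
  len (Q - P) *
    (volume {s : ℝ | s ∈ Set.Icc (0:ℝ) 1 ∧ dot c.n (P + s • (Q - P) - c.D) ≤ 0}).toReal

/-- Total arclength of `∂T ∩ T⁺`. -/
def bdryLenPlus : ℝ :=
  c.edgeLenPlus c.A₂ c.A₃ + c.edgeLenPlus c.A₁ c.A₃ + c.edgeLenPlus c.A₁ c.A₂

/-- Total arclength of `∂T ∩ T⁻`. -/
def bdryLenMinus : ℝ :=
  c.edgeLenMinus c.A₂ c.A₃ + c.edgeLenMinus c.A₁ c.A₃ + c.edgeLenMinus c.A₁ c.A₂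

end CutTriangle

/-!
Continuity of the velocity on the cut `[D, E]` forces the jump `v⁺ − v⁻` to be `⟨n, x − D⟩ a` for
a constant vector `a`; the stress-jump and divergence conditions then give `a = t` and `q⁺ = q⁻`,
and the pressure degree of freedom makes the common pressure vanish. Hence `ṽ = v⁻ + w t`, and as
`w` and `π w` have equal edge means, the velocity degrees of freedom say that the affine map
`v⁻ + (π w) t` has vanishing edge means, so it is zero by unisolvence of the Crouzeix–Raviart
element. The converse is a direct check along the same lines.
-/

open Matrix

lemma dot_eq_dotProduct (x y : Fin 2 → ℝ) : dot x y = x ⬝ᵥ y := by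
  simp [dot, dotProduct, Fin.sum_univ_two]

lemma edgeMean_dot_add (G : Fin 2 → ℝ) (B : ℝ) (P Q : Fin 2 → ℝ) :
    edgeMean P Q (fun x => dot G x + B) = ((dot G P + B) + (dot G Q + B)) / 2 := by
  have h : ∀ s : ℝ, dot G (P + s • (Q - P)) + B = (dot G P + B) + s * (dot G Q - dot G P) := by
    intro s; simp only [dot_eq_dotProduct, dotProduct_add, dotProduct_smul, dotProduct_sub,
      smul_eq_mul]; ring
  simp only [edgeMean, h]
  rw [intervalIntegral.integral_add intervalIntegrable_const
    (intervalIntegral.intervalIntegrable_id.mul_const _), intervalIntegral.integral_const,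
    intervalIntegral.integral_mul_const, integral_id, smul_eq_mul]
  ring

lemma edgeMean_add_mul {u v : (Fin 2 → ℝ) → ℝ} (hu : Continuous u) (hv : Continuous v)
    (a : ℝ) (P Q : Fin 2 → ℝ) :
    edgeMean P Q (fun x => u x + a * v x) = edgeMean P Q u + a * edgeMean P Q v := by
  have hγ : Continuous fun s : ℝ => P + s • (Q - P) := by fun_prop
  have hu' : IntervalIntegrable (fun s : ℝ => u (P + s • (Q - P))) volume 0 1 :=
    (hu.comp hγ).intervalIntegrable _ _
  have hv' : IntervalIntegrable (fun s : ℝ => v (P + s • (Q - P))) volume 0 1 :=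
    (hv.comp hγ).intervalIntegrable _ _
  rw [edgeMean, intervalIntegral.integral_add hu' (hv'.const_mul a),
    intervalIntegral.integral_const_mul]
  rfl

/-- Unisolvence of the Crouzeix–Raviart element: vanishing edge means force an affine function
to vanish at the three vertices, hence everywhere. -/
lemma edgeMeans_eq_zero_iff {A₁ A₂ A₃ : Fin 2 → ℝ} (hA : AffineIndependent ℝ ![A₁, A₂, A₃])
    (G : Fin 2 → ℝ) (B : ℝ) :
    (edgeMean A₂ A₃ (fun x => dot G x + B) = 0 ∧ edgeMean A₁ A₃ (fun x => dot G x + B) = 0 ∧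
      edgeMean A₁ A₂ (fun x => dot G x + B) = 0) ↔ ∀ x, dot G x + B = 0 := by
  simp only [edgeMean_dot_add]
  refine ⟨fun ⟨h₁, h₂, h₃⟩ x => ?_, fun h => by simp [h]⟩
  let f : (Fin 2 → ℝ) →ᵃ[ℝ] ℝ :=
    (dotProductBilin ℝ ℝ G).toAffineMap + AffineMap.const ℝ (Fin 2 → ℝ) B
  have hf : ∀ x, f x = dot G x + B := fun x => by simp [f, dot_eq_dotProduct]
  have hspan : affineSpan ℝ (Set.range ![A₁, A₂, A₃]) = ⊤ :=
    hA.affineSpan_eq_top_iff_card_eq_finrank_add_one.mpr (by simp)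
  have hA₁ : dot G A₁ + B = 0 := by linarith
  have hA₂ : dot G A₂ + B = 0 := by linarith
  have hA₃ : dot G A₃ + B = 0 := by linarith
  have hvert : Set.EqOn f (0 : (Fin 2 → ℝ) →ᵃ[ℝ] ℝ) (Set.range ![A₁, A₂, A₃]) := by
    rintro - ⟨i, rfl⟩
    fin_cases i <;> simpa [hf]
  simpa [hf] using congrArg (· x) (AffineMap.ext_on hspan hvert)

lemma sub_eq_vecMulVec_of_forall {Mp Mm : Matrix (Fin 2) (Fin 2) ℝ} {bp bm n D a : Fin 2 → ℝ}
    (h : ∀ x, Mp *ᵥ x + bp = Mm *ᵥ x + bm + dot n (x - D) • a) : Mp - Mm = vecMulVec a n := by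
  have h0 := h 0
  refine ext_of_mulVec_single fun i => ?_
  have hi := h (Pi.single i 1)
  simp only [mulVec_zero, zero_add, zero_sub, dot_eq_dotProduct, dotProduct_neg] at h0
  simp only [dot_eq_dotProduct, dotProduct_sub] at hi
  rw [sub_mulVec, vecMulVec_mulVec]
  simp only [op_smul_eq_smul]
  linear_combination (norm := module) hi - h0

lemma sig_one_mulVec_sub_sig_one_mulVec (A B : Matrix (Fin 2) (Fin 2) ℝ) (p q : ℝ)
    (v : Fin 2 → ℝ) :
    sig 1 A p *ᵥ v - sig 1 B q *ᵥ v = (A - B) *ᵥ v + (A - B)ᵀ *ᵥ v - (p - q) • v := by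
  simp only [sig, eps, sub_mulVec, add_mulVec, smul_mulVec, transpose_sub, one_mulVec]
  module

lemma mulVec_add_add_smul_apply (M : Matrix (Fin 2) (Fin 2) ℝ) (m g t x : Fin 2 → ℝ) (b : ℝ)
    (i : Fin 2) :
    (M *ᵥ x + m + (dot g x + b) • t) i = dot (M i + t i • g) x + (m i + t i * b) := by
  simp only [Pi.add_apply, Pi.smul_apply, smul_eq_mul, mulVec, dot_eq_dotProduct, add_dotProduct,
    smul_dotProduct]
  ring

namespace CutTriangle

variable (c : CutTriangle)

lemma dot_n_n : c.n ⬝ᵥ c.n = 1 := by simpa [dot_eq_dotProduct] using c.hn_unit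

lemma dot_n_t : c.n ⬝ᵥ c.t = 0 := by
  simp only [t, dotProduct, Fin.sum_univ_two, cons_val_zero, cons_val_one, cons_val_fin_one]
  ring

lemma eq_dot_t_smul_t {v : Fin 2 → ℝ} (hv : c.n ⬝ᵥ v = 0) : v = (c.t ⬝ᵥ v) • c.t := by
  have hn := c.dot_n_n
  simp only [t, dotProduct, Fin.sum_univ_two] at hn hv ⊢
  ext i; fin_cases i <;> simp only [Fin.zero_eta, Fin.mk_one, cons_val_zero, cons_val_one,
    cons_val_fin_one, Pi.smul_apply, smul_eq_mul]
  · linear_combination (-v 0) * hn + c.n 0 * hv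
  · linear_combination (-v 1) * hn + c.n 1 * hv

lemma D_ne_E : c.D ≠ c.E := by
  intro hDE
  obtain ⟨d, d', -, -, hdd', hD⟩ := c.hD
  obtain ⟨e, e', he, -, hee', hE⟩ := c.hE
  have hwD : ∑ i, ![0, d, d'] i = 1 := by simp [Fin.sum_univ_three, hdd']
  have hwE : ∑ i, ![e, 0, e'] i = 1 := by simp [Fin.sum_univ_three, hee']
  have key := (affineIndependent_iff_eq_of_fintype_affineCombination_eq ℝ _).mp c.indep
    _ _ hwD hwE (by
      rw [Finset.univ.affineCombination_eq_linear_combination _ _ hwD,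
        Finset.univ.affineCombination_eq_linear_combination _ _ hwE]
      simp [Fin.sum_univ_three, hD, hE, hDE])
  have he0 := congrFun key 0
  simp only [cons_val_zero] at he0
  linarith

lemma eq_vecMulVec_of_mulVec_t {J : Matrix (Fin 2) (Fin 2) ℝ} (hJ : J *ᵥ c.t = 0) :
    J = vecMulVec (J *ᵥ c.n) c.n := by
  have hn := c.dot_n_n
  simp only [dotProduct, Fin.sum_univ_two] at hn
  ext i j
  have hi : J i 0 * c.n 1 - J i 1 * c.n 0 = 0 := by
    simpa [t, mulVec, dotProduct, Fin.sum_univ_two, sub_eq_add_neg] using congrFun hJ i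
  fin_cases j <;> simp only [Fin.zero_eta, Fin.mk_one, vecMulVec, mulVec, dotProduct,
    Fin.sum_univ_two, of_apply]
  · linear_combination (-J i 0) * hn + c.n 1 * hi
  · linear_combination (-J i 1) * hn - c.n 0 * hi

lemma agree_on_cut_iff {Mp Mm : Matrix (Fin 2) (Fin 2) ℝ} {bp bm : Fin 2 → ℝ} :
    (∀ x ∈ segment ℝ c.D c.E, Mp *ᵥ x + bp = Mm *ᵥ x + bm) ↔
      ∃ a, ∀ x, Mp *ᵥ x + bp = Mm *ᵥ x + bm + dot c.n (x - c.D) • a := by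
  constructor
  · intro h
    have hD := h c.D (left_mem_segment ℝ c.D c.E)
    have hE := h c.E (right_mem_segment ℝ c.D c.E)
    set J := Mp - Mm
    have hJED : J *ᵥ (c.E - c.D) = 0 := by
      simp only [J, sub_mulVec, mulVec_sub]
      linear_combination (norm := module) hE - hD
    have hED := c.eq_dot_t_smul_t (v := c.E - c.D) (by simpa [dot_eq_dotProduct] using c.hn_orth)
    have hne : c.t ⬝ᵥ (c.E - c.D) ≠ 0 := fun h0 => c.D_ne_E (by
      rw [h0, zero_smul, sub_eq_zero] at hED; exact hED.symm)
    have hJt : J *ᵥ c.t = 0 := by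
      rw [hED, mulVec_smul] at hJED
      exact (smul_eq_zero.mp hJED).resolve_left hne
    refine ⟨J *ᵥ c.n, fun x => ?_⟩
    have hJx : J *ᵥ (x - c.D) = dot c.n (x - c.D) • (J *ᵥ c.n) := by
      conv_lhs => rw [c.eq_vecMulVec_of_mulVec_t hJt]
      rw [vecMulVec_mulVec, op_smul_eq_smul, dot_eq_dotProduct]
    simp only [J, sub_mulVec, mulVec_sub] at hJx ⊢
    linear_combination (norm := module) hJx + hD
  · rintro ⟨a, ha⟩ x ⟨s, s', -, -, hss', rfl⟩
    have hx : s • c.D + s' • c.E - c.D = s' • (c.E - c.D) := by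
      obtain rfl : s = 1 - s' := by linarith
      module
    rw [ha, hx, dot_eq_dotProduct, dotProduct_smul, ← dot_eq_dotProduct, c.hn_orth]
    simp

lemma stress_jump_and_trace_iff {Mp Mm : Matrix (Fin 2) (Fin 2) ℝ} {a : Fin 2 → ℝ} {qp qm : ℝ}
    (hJ : Mp - Mm = vecMulVec a c.n) :
    (sig 1 Mp qp *ᵥ c.n - sig 1 Mm qm *ᵥ c.n = c.t ∧ Mp.trace = Mm.trace) ↔
      a = c.t ∧ qp = qm := by
  have hsig : sig 1 Mp qp *ᵥ c.n - sig 1 Mm qm *ᵥ c.n = a + (a ⬝ᵥ c.n - (qp - qm)) • c.n := by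
    rw [sig_one_mulVec_sub_sig_one_mulVec, hJ, transpose_vecMulVec, vecMulVec_mulVec,
      vecMulVec_mulVec, c.dot_n_n]
    simp only [op_smul_eq_smul, one_smul]
    module
  have htr : Mp.trace = Mm.trace ↔ a ⬝ᵥ c.n = 0 := by
    rw [← sub_eq_zero, ← trace_sub, hJ, trace_vecMulVec]
  rw [hsig, htr]
  constructor
  · rintro ⟨h, hn⟩
    have hq : qp - qm = 0 := by
      have := congrArg (c.n ⬝ᵥ ·) h
      simp only [dotProduct_add, dotProduct_smul, c.dot_n_n, c.dot_n_t, dotProduct_comm c.n a,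
        hn, smul_eq_mul] at this
      linarith
    refine ⟨?_, sub_eq_zero.mp hq⟩
    rw [hn, hq, sub_zero, zero_smul, add_zero] at h
    exact h
  · rintro ⟨rfl, rfl⟩
    have := c.dot_n_t
    rw [dotProduct_comm] at this
    simp [this]

lemma continuous_w : Continuous c.w := by
  unfold w; simp only [dot]; fun_prop

lemma vtilde_eq {Mp Mm : Matrix (Fin 2) (Fin 2) ℝ} {bp bm : Fin 2 → ℝ}
    (h : ∀ x, Mp *ᵥ x + bp = Mm *ᵥ x + bm + dot c.n (x - c.D) • c.t) (x : Fin 2 → ℝ) :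
    c.vtilde Mp bp Mm bm x = Mm *ᵥ x + bm + c.w x • c.t := by
  unfold vtilde w
  split_ifs with hx
  · rw [h, max_eq_left hx]
  · rw [max_eq_right (not_le.mp hx).le, zero_smul, add_zero]

/-- On each edge where `π w` and `w` have the same mean, the kink `w • t` of the piecewise
velocity can be traded for the affine `π w • t`. -/
lemma edgeMean_vtilde {Mp Mm : Matrix (Fin 2) (Fin 2) ℝ} {bp bm g : Fin 2 → ℝ} {b : ℝ}
    (h : ∀ x, Mp *ᵥ x + bp = Mm *ᵥ x + bm + dot c.n (x - c.D) • c.t) {P Q : Fin 2 → ℝ}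
    (hPQ : edgeMean P Q (fun x => dot g x + b) = edgeMean P Q c.w) (i : Fin 2) :
    edgeMean P Q (fun x => c.vtilde Mp bp Mm bm x i) =
      edgeMean P Q (fun x => dot (Mm i + c.t i • g) x + (bm i + c.t i * b)) := by
  have hv : (fun x => c.vtilde Mp bp Mm bm x i) = fun x => (Mm *ᵥ x + bm) i + c.t i * c.w x := by
    funext x; rw [c.vtilde_eq h, Pi.add_apply, Pi.smul_apply, smul_eq_mul, mul_comm]
  have hL : (fun x => dot (Mm i + c.t i • g) x + (bm i + c.t i * b)) =
      fun x => (Mm *ᵥ x + bm) i + c.t i * (dot g x + b) := by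
    funext x; rw [← mulVec_add_add_smul_apply, Pi.add_apply, Pi.smul_apply, smul_eq_mul, mul_comm]
  have hcont : Continuous fun x => (Mm *ᵥ x + bm) i := by
    simp only [Pi.add_apply, mulVec, dotProduct, Fin.sum_univ_two]; fun_prop
  have hLcont : Continuous fun x => dot g x + b := by simp only [dot]; fun_prop
  rw [hv, hL, edgeMean_add_mul hcont c.continuous_w, edgeMean_add_mul hcont hLcont, hPQ]

lemma volume_T_ne_top : volume c.T ≠ ⊤ :=
  (Set.Finite.isCompact_convexHull (𝕜 := ℝ) (Set.toFinite _)).measure_lt_top.ne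

lemma volume_T_pos : 0 < volume c.T := by
  have hspan : affineSpan ℝ (Set.range ![c.A₁, c.A₂, c.A₃]) = ⊤ :=
    c.indep.affineSpan_eq_top_iff_card_eq_finrank_add_one.mpr (by simp)
  have hrange : Set.range ![c.A₁, c.A₂, c.A₃] = {c.A₁, c.A₂, c.A₃} := by
    ext; simp [or_comm, or_left_comm]
  rw [hrange] at hspan
  have hint : (interior c.T).Nonempty :=
    interior_convexHull_nonempty_iff_affineSpan_eq_top.mpr hspan
  exact (isOpen_interior.measure_pos volume hint).trans_le (measure_mono interior_subset)

lemma area_Tplus_add_area_Tminus_pos : 0 < area c.Tplus + area c.Tminus := by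
  have hp : volume c.Tplus ≠ ⊤ := measure_ne_top_of_subset Set.inter_subset_left c.volume_T_ne_top
  have hm : volume c.Tminus ≠ ⊤ := measure_ne_top_of_subset Set.inter_subset_left c.volume_T_ne_top
  have hcover : c.T ⊆ c.Tplus ∪ c.Tminus := fun x hx =>
    (le_total 0 (dot c.n (x - c.D))).imp (fun h => ⟨hx, h⟩) (fun h => ⟨hx, h⟩)
  rw [area, area, ← ENNReal.toReal_add hp hm]
  exact ENNReal.toReal_pos ((c.volume_T_pos.trans_le
    ((measure_mono hcover).trans (measure_union_le _ _))).ne') (ENNReal.add_ne_top.mpr ⟨hp, hm⟩)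

lemma pressure_dof_eq_zero_iff (q : ℝ) :
    (area c.Tplus * q + area c.Tminus * q) / area c.T = 0 ↔ q = 0 := by
  have hT : area c.T ≠ 0 := (ENNReal.toReal_pos c.volume_T_pos.ne' c.volume_T_ne_top).ne'
  rw [← add_mul, div_eq_zero_iff, mul_eq_zero]
  simp [c.area_Tplus_add_area_Tminus_pos.ne', hT]

lemma dof_eq_zero_iff {Mp Mm : Matrix (Fin 2) (Fin 2) ℝ} {bp bm g : Fin 2 → ℝ} {b q : ℝ}
    (hL : c.IsCR c.w g b) (h : ∀ x, Mp *ᵥ x + bp = Mm *ᵥ x + bm + dot c.n (x - c.D) • c.t) :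
    c.dof Mp bp Mm bm q q = 0 ↔ q = 0 ∧ ∀ x, Mm *ᵥ x + bm = (-(dot g x + b)) • c.t := by
  have hcomp : (∀ x, Mm *ᵥ x + bm = (-(dot g x + b)) • c.t) ↔
      ∀ i : Fin 2, ∀ x, dot (Mm i + c.t i • g) x + (bm i + c.t i * b) = 0 := by
    simp only [neg_smul, eq_neg_iff_add_eq_zero, funext_iff, mulVec_add_add_smul_apply,
      Pi.zero_apply]
    exact forall_comm
  simp only [dof, c.edgeMean_vtilde h hL.1, c.edgeMean_vtilde h hL.2.1,
    c.edgeMean_vtilde h hL.2.2, Matrix.cons_eq_zero_iff, Matrix.zero_empty, and_true,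
    c.pressure_dof_eq_zero_iff, hcomp, Fin.forall_fin_two, ← edgeMeans_eq_zero_iff c.indep]
  tauto

end CutTriangle

/-- the quadruple `(v⁺, v⁻, q⁺, q⁻)` (with `v± x = M± x + b±`) satisfying the
tangential stress-jump `σ(1,∇v⁺,q⁺)n − σ(1,∇v⁻,q⁻)n = t`, continuity on `[D,E]`, divergence
continuity and vanishing degrees of freedom exists, is unique, and is given explicitly by
`q⁺ = q⁻ = 0`, `v⁺(x) = (⟨n, x − D⟩ − L(x)) t`, `v⁻(x) = −L(x) t`, where `L = π w`
(represented by `L x = ⟨g, x⟩ + b`) is the CR interpolant of `w(x) = max(⟨n, x − D⟩, 0)`. -/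
theorem statement5 (c : CutTriangle) (g : Fin 2 → ℝ) (b : ℝ)
    (hL : c.IsCR c.w g b)
    (Mp Mm : Matrix (Fin 2) (Fin 2) ℝ) (bp bm : Fin 2 → ℝ) (qp qm : ℝ) :
    ((sig 1 Mp qp).mulVec c.n - (sig 1 Mm qm).mulVec c.n = c.t ∧
      (∀ x ∈ segment ℝ c.D c.E, Mp.mulVec x + bp = Mm.mulVec x + bm) ∧
      Mp.trace = Mm.trace ∧
      c.dof Mp bp Mm bm qp qm = 0) ↔
    (qp = 0 ∧ qm = 0 ∧
      (∀ x : Fin 2 → ℝ, Mp.mulVec x + bp = (dot c.n (x - c.D) - (dot g x + b)) • c.t) ∧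
      (∀ x : Fin 2 → ℝ, Mm.mulVec x + bm = (-(dot g x + b)) • c.t)) := by
  constructor
  · rintro ⟨hσ, hcut, htr, hdof⟩
    obtain ⟨a, hjump⟩ := c.agree_on_cut_iff.mp hcut
    obtain ⟨rfl, rfl⟩ :=
      (c.stress_jump_and_trace_iff (sub_eq_vecMulVec_of_forall hjump)).mp ⟨hσ, htr⟩
    obtain ⟨rfl, hm⟩ := (c.dof_eq_zero_iff hL hjump).mp hdof
    refine ⟨rfl, rfl, fun x => ?_, hm⟩
    rw [hjump, hm]
    module
  · rintro ⟨rfl, rfl, hp, hm⟩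
    have hjump : ∀ x, Mp *ᵥ x + bp = Mm *ᵥ x + bm + dot c.n (x - c.D) • c.t := fun x => by
      rw [hp, hm]
      module
    obtain ⟨hσ, htr⟩ :=
      (c.stress_jump_and_trace_iff (sub_eq_vecMulVec_of_forall hjump)).mpr ⟨rfl, rfl⟩
    exact ⟨hσ, c.agree_on_cut_iff.mpr ⟨c.t, hjump⟩, htr, (c.dof_eq_zero_iff hL hjump).mpr ⟨rfl, hm⟩⟩

end StokesIFE
end
end

section
/- Let μ⁺, μ⁻ > 0 and let (v⁺, v⁻, q⁺, q⁻) be a local IFE pair on a cut triangle (T, D, E) as in the setup, with piecewise velocity ṽ. Let π ṽ be the componentwise Crouzeix–Raviart interpolant of ṽ, let L = π w be the Crouzeix–Raviart interpolant of w(x) = max(⟨n, x − D⟩, 0), and set q̄ = (|T⁺| q⁺ + |T⁻| q⁻)/|T|. Then 1 + (μ⁻/μ⁺ − 1)⟨∇L, n⟩ ≥ min(1, μ⁻/μ⁺) > 0, and with c₁ = ⟨n, σ(μ⁻ − μ⁺, ∇(π ṽ), 0) n⟩ and c₂ = ⟨t, σ(μ⁻/μ⁺ − 1, ∇(π ṽ),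 0) n⟩ / (1 + (μ⁻/μ⁺ − 1)⟨∇L, n⟩), one has the explicit representation: v⁺(x) = (π ṽ)(x) + c₂ (⟨n, x − D⟩ − L(x)) t and v⁻(x) = (π ṽ)(x) − c₂ L(x) t for all x ∈ ℝ², q⁺ = q̄ + c₁ (|T⁺|/|T| − 1), and q⁻ = q̄ + c₁ |T⁺|/|T|. -/
open MeasureTheory

noncomputable section

namespace StokesIFE

section AuxLemmas

lemma integral_affine (C K : ℝ) : ∫ s in (0:ℝ)..1, (C + s * K) = C + K / 2 := by
  rw [intervalIntegral.integral_add intervalIntegrable_const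
    ((intervalIntegral.intervalIntegrable_id).mul_const K)]
  simp [intervalIntegral.integral_mul_const, integral_id]
  ring

lemma edgeMean_affine (P Q g : Fin 2 → ℝ) (b : ℝ) :
    edgeMean P Q (fun x => dot g x + b) = dot g P + dot g (Q - P) / 2 + b := by
  have h : ∀ s : ℝ, dot g (P + s • (Q - P)) + b = (dot g P + b) + s * dot g (Q - P) := by
    intro s; simp [dot]; ring
  unfold edgeMean
  simp_rw [h]
  rw [integral_affine]; ring

lemma integral_ramp (d : ℝ) (h0 : 0 ≤ d) (h1 : d ≤ 1) :
    ∫ s in (0:ℝ)..1, max (s - d) 0 = (1 - d) ^ 2 / 2 := by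
  have hc : Continuous fun s : ℝ => max (s - d) 0 :=
    (continuous_id.sub continuous_const).max continuous_const
  rw [← intervalIntegral.integral_add_adjacent_intervals (a := (0:ℝ)) (b := d) (c := 1)
    (hc.intervalIntegrable _ _) (hc.intervalIntegrable _ _)]
  have e1 : ∫ s in (0:ℝ)..d, max (s - d) 0 = ∫ s in (0:ℝ)..d, (0:ℝ) := by
    apply intervalIntegral.integral_congr
    intro s hs
    rw [Set.uIcc_of_le h0] at hs
    simp only
    rw [max_eq_right (by linarith [hs.2])]
  have e2 : ∫ s in d..(1:ℝ), max (s - d) 0 = ∫ s in d..(1:ℝ), (s - d) := by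
    apply intervalIntegral.integral_congr
    intro s hs
    rw [Set.uIcc_of_le h1] at hs
    simp only
    rw [max_eq_left (by linarith [hs.1])]
  rw [e1, e2]
  rw [intervalIntegral.integral_sub intervalIntegral.intervalIntegrable_id
    intervalIntegrable_const]
  simp [integral_id]
  ring

/-- The inner product with a fixed vector, as a linear map. -/
def dotL (n : Fin 2 → ℝ) : (Fin 2 → ℝ) →ₗ[ℝ] ℝ where
  toFun x := dot n x
  map_add' x y := by simp [dot]; ring
  map_smul' c x := by simp [dot]; ring

lemma hyper_null (n : Fin 2 → ℝ) (hn : dot n n = 1) (D : Fin 2 → ℝ) :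
    MeasureTheory.volume {x : Fin 2 → ℝ | dot n (x - D) = 0} = 0 := by
  set S : AffineSubspace ℝ (Fin 2 → ℝ) := AffineSubspace.mk' D (LinearMap.ker (dotL n)) with hSdef
  have hmem : ∀ x : Fin 2 → ℝ, x ∈ S ↔ dot n (x - D) = 0 := by
    intro x
    rw [hSdef, AffineSubspace.mem_mk', LinearMap.mem_ker]
    rfl
  have hS : S ≠ ⊤ := by
    intro hS
    have h1 : (D + n) ∈ S := by rw [hS]; trivial
    rw [hmem] at h1
    simp only [add_sub_cancel_left] at h1
    rw [hn] at h1; exact one_ne_zero h1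
  have h0 : volume (S : Set (Fin 2 → ℝ)) = 0 := Measure.addHaar_affineSubspace volume S hS
  have heq : {x : Fin 2 → ℝ | dot n (x - D) = 0} = (S : Set (Fin 2 → ℝ)) := by
    ext x; simp [Set.mem_setOf_eq, hmem x]
  rw [heq]; exact h0

lemma range3 (a b c : Fin 2 → ℝ) : Set.range ![a, b, c] = {a, b, c} := by
  ext x
  simp [Fin.exists_fin_succ]
  aesop

lemma cross_ne (A₁ A₂ A₃ : Fin 2 → ℝ) (h : AffineIndependent ℝ ![A₁, A₂, A₃]) :
    (A₂ - A₁) 0 * (A₃ - A₁) 1 - (A₂ - A₁) 1 * (A₃ - A₁) 0 ≠ 0 := by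
  intro h0
  rw [affineIndependent_iff_not_collinear, range3] at h
  apply h
  by_cases hu : A₂ - A₁ = 0
  · have h21 : A₂ = A₁ := sub_eq_zero.mp hu
    rw [collinear_iff_of_mem (Set.mem_insert A₁ _)]
    refine ⟨A₃ - A₁, fun p hp => ?_⟩
    rcases hp with rfl | h2 | h2
    · exact ⟨0, by simp⟩
    · rw [h2, h21]; exact ⟨0, by simp⟩
    · rw [Set.mem_singleton_iff] at h2; rw [h2]
      refine ⟨1, ?_⟩; funext i; simp [Pi.sub_apply]
  · have hu' : (A₂ - A₁) 0 ≠ 0 ∨ (A₂ - A₁) 1 ≠ 0 := by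
      by_contra hc
      push_neg at hc
      apply hu; funext i; fin_cases i <;> simp [hc.1, hc.2]
    rw [collinear_iff_of_mem (Set.mem_insert A₁ _)]
    refine ⟨A₂ - A₁, fun p hp => ?_⟩
    rcases hp with rfl | h2 | h2
    · exact ⟨0, by simp⟩
    · rw [h2]; refine ⟨1, ?_⟩; funext i; simp [Pi.sub_apply]
    · rw [Set.mem_singleton_iff] at h2; subst h2
      rcases hu' with h1 | h1
      · refine ⟨(p - A₁) 0 / (A₂ - A₁) 0, ?_⟩
        funext i
        fin_cases i <;>
          · simp only [Pi.sub_apply, Pi.smul_apply, Pi.add_apply, smul_eq_mul, Pi.vadd_apply,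
              vadd_eq_add, Fin.zero_eta, Fin.mk_one] at h0 h1 ⊢
            field_simp
            all_goals nlinarith [h0]
      · refine ⟨(p - A₁) 1 / (A₂ - A₁) 1, ?_⟩
        funext i
        fin_cases i <;>
          · simp only [Pi.sub_apply, Pi.smul_apply, Pi.add_apply, smul_eq_mul, Pi.vadd_apply,
              vadd_eq_add, Fin.zero_eta, Fin.mk_one] at h0 h1 ⊢
            field_simp
            all_goals nlinarith [h0]

lemma mulVec_apply2 (M : Matrix (Fin 2) (Fin 2) ℝ) (x : Fin 2 → ℝ) (j : Fin 2) :
    (M.mulVec x) j = M j 0 * x 0 + M j 1 * x 1 := by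
  simp [Matrix.mulVec, dotProduct, Fin.sum_univ_two]

lemma sig_mulVec_apply (μ q : ℝ) (M : Matrix (Fin 2) (Fin 2) ℝ) (x : Fin 2 → ℝ) (j : Fin 2) :
    ((sig μ M q).mulVec x) j
      = 2 * μ * ((2⁻¹ * (M j 0 + M 0 j)) * x 0 + (2⁻¹ * (M j 1 + M 1 j)) * x 1) - q * x j := by
  fin_cases j <;>
    simp [sig, eps, Matrix.mulVec, dotProduct, Fin.sum_univ_two, Matrix.one_apply,
      Matrix.transpose_apply] <;> ring

lemma area_T_pos (c : CutTriangle) : 0 < area c.T := by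
  have hspan : affineSpan ℝ ({c.A₁, c.A₂, c.A₃} : Set (Fin 2 → ℝ)) = ⊤ := by
    rw [← range3]
    rw [c.indep.affineSpan_eq_top_iff_card_eq_finrank_add_one]
    simp
  have hint : (interior (convexHull ℝ ({c.A₁, c.A₂, c.A₃} : Set (Fin 2 → ℝ)))).Nonempty := by
    rw [interior_convexHull_nonempty_iff_affineSpan_eq_top]
    exact hspan
  have hcpt : IsCompact (convexHull ℝ ({c.A₁, c.A₂, c.A₃} : Set (Fin 2 → ℝ))) :=
    (Set.Finite.insert _ (Set.Finite.insert _ (Set.finite_singleton _))).isCompact_convexHull ℝ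
  have h1 : 0 < volume (convexHull ℝ ({c.A₁, c.A₂, c.A₃} : Set (Fin 2 → ℝ))) :=
    MeasureTheory.Measure.measure_pos_of_nonempty_interior volume hint
  exact ENNReal.toReal_pos h1.ne' hcpt.measure_lt_top.ne

lemma isCompact_T (c : CutTriangle) : IsCompact c.T :=
  (Set.Finite.insert _ (Set.Finite.insert _ (Set.finite_singleton _))).isCompact_convexHull ℝ

lemma dot_sub_continuous (n D : Fin 2 → ℝ) :
    Continuous fun x : Fin 2 → ℝ => dot n (x - D) := by
  unfold dot
  fun_prop

lemma area_sum (c : CutTriangle) : area c.Tplus + area c.Tminus = area c.T := by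
  have hT : MeasurableSet c.T := (isCompact_T c).isClosed.measurableSet
  have hfin : volume c.T < ⊤ := (isCompact_T c).measure_lt_top
  have hcont := dot_sub_continuous c.n c.D
  have hcl : MeasurableSet {x : Fin 2 → ℝ | 0 ≤ dot c.n (x - c.D)} :=
    (isClosed_le continuous_const hcont).measurableSet
  have hcl2 : MeasurableSet {x : Fin 2 → ℝ | dot c.n (x - c.D) ≤ 0} :=
    (isClosed_le hcont continuous_const).measurableSet
  have hnull := hyper_null c.n c.hn_unit c.D
  unfold CutTriangle.Tplus CutTriangle.Tminus area
  have hunion : (c.T ∩ {x | 0 ≤ dot c.n (x - c.D)}) ∪ (c.T ∩ {x | dot c.n (x - c.D) ≤ 0})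
      = c.T := by
    ext x
    simp only [Set.mem_union, Set.mem_inter_iff, Set.mem_setOf_eq]
    constructor
    · rintro (⟨h1, _⟩ | ⟨h1, _⟩) <;> exact h1
    · intro hx
      rcases le_total 0 (dot c.n (x - c.D)) with h1 | h1
      · exact Or.inl ⟨hx, h1⟩
      · exact Or.inr ⟨hx, h1⟩
  have hinter : volume ((c.T ∩ {x | 0 ≤ dot c.n (x - c.D)})
      ∩ (c.T ∩ {x | dot c.n (x - c.D) ≤ 0})) = 0 := by
    apply measure_mono_null _ hnull
    rintro x ⟨⟨_, h1⟩, ⟨_, h2⟩⟩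
    exact le_antisymm h2 h1
  have key := measure_union_add_inter (μ := volume) (s := c.T ∩ {x | 0 ≤ dot c.n (x - c.D)})
    (t := c.T ∩ {x | dot c.n (x - c.D) ≤ 0}) (hT.inter hcl2)
  rw [hunion, hinter, add_zero] at key
  have f1 : volume (c.T ∩ {x | 0 ≤ dot c.n (x - c.D)}) < ⊤ :=
    lt_of_le_of_lt (measure_mono Set.inter_subset_left) hfin
  have f2 : volume (c.T ∩ {x | dot c.n (x - c.D) ≤ 0}) < ⊤ :=
    lt_of_le_of_lt (measure_mono Set.inter_subset_left) hfin
  rw [key, ENNReal.toReal_add f1.ne f2.ne]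

end AuxLemmas

set_option maxHeartbeats 2000000 in
/-- explicit representation of local IFE pairs: with `π ṽ` the componentwise
CR interpolant of the piecewise velocity (represented by `Mπ, bπ`), `L = π w` the CR
interpolant of `w(x) = max(⟨n, x−D⟩, 0)` (represented by `g, b`), and
`q̄ = (|T⁺| q⁺ + |T⁻| q⁻)/|T|`, the denominator `1 + (μ⁻/μ⁺ − 1)⟨∇L, n⟩` is bounded below
by `min(1, μ⁻/μ⁺) > 0` and, with
`c₁ = ⟨n, σ(μ⁻ − μ⁺, ∇(π ṽ), 0) n⟩` and
`c₂ = ⟨t, σ(μ⁻/μ⁺ − 1, ∇(π ṽ), 0) n⟩ / (1 + (μ⁻/μ⁺ − 1)⟨∇L, n⟩)`, one has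
`v⁺(x) = (π ṽ)(x) + c₂ (⟨n, x − D⟩ − L(x)) t`, `v⁻(x) = (π ṽ)(x) − c₂ L(x) t`,
`q⁺ = q̄ + c₁ (|T⁺|/|T| − 1)` and `q⁻ = q̄ + c₁ |T⁺|/|T|`. -/
theorem statement8 (c : CutTriangle) (μp μm : ℝ) (hμp : 0 < μp) (hμm : 0 < μm)
    (Mp Mm : Matrix (Fin 2) (Fin 2) ℝ) (bp bm : Fin 2 → ℝ) (qp qm : ℝ)
    (hIFE : c.IsIFEPair μp μm Mp bp Mm bm qp qm)
    (Mπ : Matrix (Fin 2) (Fin 2) ℝ) (bπ : Fin 2 → ℝ)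
    (hπ : c.IsCRvec (c.vtilde Mp bp Mm bm) Mπ bπ)
    (g : Fin 2 → ℝ) (b : ℝ) (hL : c.IsCR c.w g b) :
    min 1 (μm / μp) ≤ 1 + (μm / μp - 1) * dot g c.n ∧
    0 < min 1 (μm / μp) ∧
    (∀ x : Fin 2 → ℝ, Mp.mulVec x + bp = (Mπ.mulVec x + bπ) +
        ((dot c.t ((sig (μm / μp - 1) Mπ 0).mulVec c.n) /
            (1 + (μm / μp - 1) * dot g c.n)) *
          (dot c.n (x - c.D) - (dot g x + b))) • c.t) ∧
    (∀ x : Fin 2 → ℝ, Mm.mulVec x + bm = (Mπ.mulVec x + bπ) -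
        ((dot c.t ((sig (μm / μp - 1) Mπ 0).mulVec c.n) /
            (1 + (μm / μp - 1) * dot g c.n)) *
          (dot g x + b)) • c.t) ∧
    qp = (area c.Tplus * qp + area c.Tminus * qm) / area c.T +
        dot c.n ((sig (μm - μp) Mπ 0).mulVec c.n) * (area c.Tplus / area c.T - 1) ∧
    qm = (area c.Tplus * qp + area c.Tminus * qm) / area c.T +
        dot c.n ((sig (μm - μp) Mπ 0).mulVec c.n) * (area c.Tplus / area c.T) := by
  obtain ⟨hJ1, hJ2, hJ3⟩ := hIFE
  obtain ⟨a1, dd, ha1, hdd, had, hDeq⟩ := c.hD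
  obtain ⟨a2, ee, ha2, hee, hae, hEeq⟩ := c.hE
  have hd1 : dd < 1 := by linarith
  have he1 : ee < 1 := by linarith
  have hDc : ∀ i, c.D i = (1 - dd) * c.A₂ i + dd * c.A₃ i := by
    intro i
    rw [← hDeq]
    simp only [Pi.add_apply, Pi.smul_apply, smul_eq_mul]
    linear_combination c.A₂ i * had
  have hEc : ∀ i, c.E i = (1 - ee) * c.A₁ i + ee * c.A₃ i := by
    intro i
    rw [← hEeq]
    simp only [Pi.add_apply, Pi.smul_apply, smul_eq_mul]
    linear_combination c.A₁ i * hae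
  have h3 := c.hn_unit
  simp only [dot] at h3
  have horth := c.hn_orth
  simp only [dot, Pi.sub_apply] at horth
  have hf3 := c.hn_sign
  simp only [dot, Pi.sub_apply] at hf3
  have hX := cross_ne c.A₁ c.A₂ c.A₃ c.indep
  simp only [Pi.sub_apply] at hX
  have ht0 : c.t 0 = c.n 1 := rfl
  have ht1 : c.t 1 = -c.n 0 := rfl
  -- J2 at D and E, componentwise
  have hJ2D := hJ2 c.D (left_mem_segment ℝ c.D c.E)
  have hJ2E := hJ2 c.E (right_mem_segment ℝ c.D c.E)
  have hJ2D0 := congrFun hJ2D 0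
  have hJ2D1 := congrFun hJ2D 1
  have hJ2E0 := congrFun hJ2E 0
  have hJ2E1 := congrFun hJ2E 1
  simp only [Pi.add_apply, mulVec_apply2] at hJ2D0 hJ2D1 hJ2E0 hJ2E1
  -- tangential component of E - D
  set τ : ℝ := c.n 1 * (c.E 0 - c.D 0) - c.n 0 * (c.E 1 - c.D 1) with hτdef
  have hED0 : c.E 0 - c.D 0 = τ * c.n 1 := by
    rw [hτdef]
    linear_combination c.n 0 * horth - (c.E 0 - c.D 0) * h3
  have hED1 : c.E 1 - c.D 1 = -(τ * c.n 0) := by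
    rw [hτdef]
    linear_combination c.n 1 * horth - (c.E 1 - c.D 1) * h3
  have hτne : τ ≠ 0 := by
    intro h0
    rw [h0] at hED0 hED1
    simp only [zero_mul, neg_zero] at hED0 hED1
    -- then E = D, giving (ee - dd) • v = (1 - dd) • u, contradicting independence
    have g0 : (ee - dd) * (c.A₃ 0 - c.A₁ 0) = (1 - dd) * (c.A₂ 0 - c.A₁ 0) := by
      have := hED0
      rw [hEc 0, hDc 0] at this
      linarith
    have g1 : (ee - dd) * (c.A₃ 1 - c.A₁ 1) = (1 - dd) * (c.A₂ 1 - c.A₁ 1) := by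
      have := hED1
      rw [hEc 1, hDc 1] at this
      linarith
    apply hX
    have h1d : (1 - dd) ≠ 0 := by linarith
    have : (1 - dd) * ((c.A₂ 0 - c.A₁ 0) * (c.A₃ 1 - c.A₁ 1)
        - (c.A₂ 1 - c.A₁ 1) * (c.A₃ 0 - c.A₁ 0)) = 0 := by
      linear_combination (c.A₃ 0 - c.A₁ 0) * g1 - (c.A₃ 1 - c.A₁ 1) * g0
    rcases mul_eq_zero.mp this with h | h
    · exact absurd h h1d
    · exact h
  -- K ⬝ t = 0, rows
  have hKED0 : (Mp 0 0 - Mm 0 0) * (c.E 0 - c.D 0) + (Mp 0 1 - Mm 0 1) * (c.E 1 - c.D 1) = 0 := by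
    linear_combination hJ2E0 - hJ2D0
  have hKED1 : (Mp 1 0 - Mm 1 0) * (c.E 0 - c.D 0) + (Mp 1 1 - Mm 1 1) * (c.E 1 - c.D 1) = 0 := by
    linear_combination hJ2E1 - hJ2D1
  have khyp1 : (Mp 0 0 - Mm 0 0) * c.n 1 - (Mp 0 1 - Mm 0 1) * c.n 0 = 0 := by
    rw [hED0, hED1] at hKED0
    have h' : τ * ((Mp 0 0 - Mm 0 0) * c.n 1 - (Mp 0 1 - Mm 0 1) * c.n 0) = 0 := by
      linear_combination hKED0
    exact (mul_eq_zero.mp h').resolve_left hτne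
  have khyp2 : (Mp 1 0 - Mm 1 0) * c.n 1 - (Mp 1 1 - Mm 1 1) * c.n 0 = 0 := by
    rw [hED0, hED1] at hKED1
    have h' : τ * ((Mp 1 0 - Mm 1 0) * c.n 1 - (Mp 1 1 - Mm 1 1) * c.n 0) = 0 := by
      linear_combination hKED1
    exact (mul_eq_zero.mp h').resolve_left hτne
  have htr : Mp 0 0 + Mp 1 1 = Mm 0 0 + Mm 1 1 := by
    have := hJ3
    simp only [Matrix.trace_fin_two] at this
    exact this
  -- normal component of K ⬝ n vanishes
  set α : ℝ := c.n 1 * ((Mp 0 0 - Mm 0 0) * c.n 0 + (Mp 0 1 - Mm 0 1) * c.n 1)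
      - c.n 0 * ((Mp 1 0 - Mm 1 0) * c.n 0 + (Mp 1 1 - Mm 1 1) * c.n 1) with hαdef
  have hnKn : c.n 0 * ((Mp 0 0 - Mm 0 0) * c.n 0 + (Mp 0 1 - Mm 0 1) * c.n 1)
      + c.n 1 * ((Mp 1 0 - Mm 1 0) * c.n 0 + (Mp 1 1 - Mm 1 1) * c.n 1) = 0 := by
    linear_combination (c.n 0 * c.n 0 + c.n 1 * c.n 1) * htr - c.n 1 * khyp1 + c.n 0 * khyp2
  have hKn0 : (Mp 0 0 - Mm 0 0) * c.n 0 + (Mp 0 1 - Mm 0 1) * c.n 1 = α * c.n 1 := by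
    rw [hαdef]
    linear_combination c.n 0 * hnKn
      - ((Mp 0 0 - Mm 0 0) * c.n 0 + (Mp 0 1 - Mm 0 1) * c.n 1) * h3
  have hKn1 : (Mp 1 0 - Mm 1 0) * c.n 0 + (Mp 1 1 - Mm 1 1) * c.n 1 = -(α * c.n 0) := by
    rw [hαdef]
    linear_combination c.n 1 * hnKn
      - ((Mp 1 0 - Mm 1 0) * c.n 0 + (Mp 1 1 - Mm 1 1) * c.n 1) * h3
  have hK00 : Mp 0 0 = Mm 0 0 + α * (c.n 1 * c.n 0) := by
    linear_combination c.n 0 * hKn0 + c.n 1 * khyp1 - (Mp 0 0 - Mm 0 0) * h3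
  have hK01 : Mp 0 1 = Mm 0 1 + α * (c.n 1 * c.n 1) := by
    linear_combination c.n 1 * hKn0 - c.n 0 * khyp1 - (Mp 0 1 - Mm 0 1) * h3
  have hK10 : Mp 1 0 = Mm 1 0 - α * (c.n 0 * c.n 0) := by
    linear_combination c.n 0 * hKn1 + c.n 1 * khyp2 - (Mp 1 0 - Mm 1 0) * h3
  have hK11 : Mp 1 1 = Mm 1 1 - α * (c.n 0 * c.n 1) := by
    linear_combination c.n 1 * hKn1 - c.n 0 * khyp2 - (Mp 1 1 - Mm 1 1) * h3
  -- pointwise representation of v⁺ in terms of v⁻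
  have hbpm0 : bp 0 = bm 0 - α * (c.n 1 * (c.n 0 * c.D 0 + c.n 1 * c.D 1)) := by
    linear_combination hJ2D0 - c.D 0 * hK00 - c.D 1 * hK01
  have hbpm1 : bp 1 = bm 1 + α * (c.n 0 * (c.n 0 * c.D 0 + c.n 1 * c.D 1)) := by
    linear_combination hJ2D1 - c.D 0 * hK10 - c.D 1 * hK11
  have hMp : ∀ (x : Fin 2 → ℝ) (j : Fin 2), (Mp.mulVec x + bp) j
      = (Mm.mulVec x + bm) j + α * (dot c.n (x - c.D)) * c.t j := by
    intro x j
    fin_cases j <;>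
      simp only [Fin.zero_eta, Fin.mk_one, Pi.add_apply, mulVec_apply2, dot, Pi.sub_apply,
        ht0, ht1]
    · rw [hK00, hK01, hbpm0]; ring
    · rw [hK10, hK11, hbpm1]; ring
  -- J1 componentwise
  have hJ10 := congrFun hJ1 0
  have hJ11 := congrFun hJ1 1
  simp only [sig_mulVec_apply] at hJ10 hJ11
  simp only [hK00, hK01, hK10, hK11] at hJ10 hJ11
  have hA : μp * α = 2 * (μm - μp) *
      (c.n 1 * (Mm 0 0 * c.n 0 + 2⁻¹ * (Mm 0 1 + Mm 1 0) * c.n 1)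
        - c.n 0 * (2⁻¹ * (Mm 0 1 + Mm 1 0) * c.n 0 + Mm 1 1 * c.n 1)) := by
    linear_combination c.n 1 * hJ10 - c.n 0 * hJ11
      - μp * α * (c.n 0 ^ 2 + c.n 1 ^ 2 + 1) * h3
  have hQ : qp - qm = 2 * (μp - μm) *
      (c.n 0 * (Mm 0 0 * c.n 0 + 2⁻¹ * (Mm 0 1 + Mm 1 0) * c.n 1)
        + c.n 1 * (2⁻¹ * (Mm 0 1 + Mm 1 0) * c.n 0 + Mm 1 1 * c.n 1)) := by
    linear_combination (-(c.n 0) * hJ10) - c.n 1 * hJ11 - (qp - qm) * h3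
  -- geometry of the cut: scalar identities
  have hf3rel : (c.n 0 * (c.A₃ 0 - c.D 0) + c.n 1 * (c.A₃ 1 - c.D 1)) = (1 - dd) * ((c.n 0 * (c.A₃ 0 - c.A₁ 0) + c.n 1 * (c.A₃ 1 - c.A₁ 1)) - (c.n 0 * (c.A₂ 0 - c.A₁ 0) + c.n 1 * (c.A₂ 1 - c.A₁ 1))) := by
    linear_combination (-(c.n 0)) * hDc 0 - c.n 1 * hDc 1
  have horth' : (dd - 1) * (c.n 0 * (c.A₂ 0 - c.A₁ 0) + c.n 1 * (c.A₂ 1 - c.A₁ 1)) + (ee - dd) * (c.n 0 * (c.A₃ 0 - c.A₁ 0) + c.n 1 * (c.A₃ 1 - c.A₁ 1)) = 0 := by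
    linear_combination horth - c.n 0 * hEc 0 + c.n 0 * hDc 0 - c.n 1 * hEc 1 + c.n 1 * hDc 1
  have hf3q : (c.n 0 * (c.A₃ 0 - c.D 0) + c.n 1 * (c.A₃ 1 - c.D 1)) = (1 - ee) * (c.n 0 * (c.A₃ 0 - c.A₁ 0) + c.n 1 * (c.A₃ 1 - c.A₁ 1)) := by
    linear_combination hf3rel + horth'
  have hqq : 0 < (c.n 0 * (c.A₃ 0 - c.A₁ 0) + c.n 1 * (c.A₃ 1 - c.A₁ 1)) := by
    by_contra h
    push_neg at h
    linarith only [hf3, hf3q, mul_nonneg (by linarith only [he1] : (0:ℝ) ≤ 1 - ee) (neg_nonneg.mpr h)]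
  have hqp : 0 < (c.n 0 * (c.A₃ 0 - c.A₁ 0) + c.n 1 * (c.A₃ 1 - c.A₁ 1)) - (c.n 0 * (c.A₂ 0 - c.A₁ 0) + c.n 1 * (c.A₂ 1 - c.A₁ 1)) := by
    by_contra h
    push_neg at h
    linarith only [hf3, hf3rel, mul_nonneg (by linarith only [hd1] : (0:ℝ) ≤ 1 - dd) (neg_nonneg.mpr h)]
  have hfA1 : c.n 0 * (c.A₁ 0 - c.D 0) + c.n 1 * (c.A₁ 1 - c.D 1) = -(ee * (c.n 0 * (c.A₃ 0 - c.A₁ 0) + c.n 1 * (c.A₃ 1 - c.A₁ 1))) := by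
    linear_combination hf3q
  have hfA2 : c.n 0 * (c.A₂ 0 - c.D 0) + c.n 1 * (c.A₂ 1 - c.D 1) = -(dd * ((c.n 0 * (c.A₃ 0 - c.A₁ 0) + c.n 1 * (c.A₃ 1 - c.A₁ 1)) - (c.n 0 * (c.A₂ 0 - c.A₁ 0) + c.n 1 * (c.A₂ 1 - c.A₁ 1)))) := by
    linear_combination hf3rel
  -- edge means of w
  have hW1 : edgeMean c.A₂ c.A₃ c.w = (c.n 0 * (c.A₃ 0 - c.D 0) + c.n 1 * (c.A₃ 1 - c.D 1)) * (1 - dd) / 2 := by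
    have hpt : ∀ s : ℝ, c.w (c.A₂ + s • (c.A₃ - c.A₂)) = ((c.n 0 * (c.A₃ 0 - c.A₁ 0) + c.n 1 * (c.A₃ 1 - c.A₁ 1)) - (c.n 0 * (c.A₂ 0 - c.A₁ 0) + c.n 1 * (c.A₂ 1 - c.A₁ 1))) * max (s - dd) 0 := by
      intro s
      have harg : dot c.n (c.A₂ + s • (c.A₃ - c.A₂) - c.D) = ((c.n 0 * (c.A₃ 0 - c.A₁ 0) + c.n 1 * (c.A₃ 1 - c.A₁ 1)) - (c.n 0 * (c.A₂ 0 - c.A₁ 0) + c.n 1 * (c.A₂ 1 - c.A₁ 1))) * (s - dd) := by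
        simp only [dot, Pi.add_apply, Pi.sub_apply, Pi.smul_apply, smul_eq_mul]
        linear_combination hfA2
      have hmm := mul_max_of_nonneg (s - dd) 0 (le_of_lt hqp)
      rw [mul_zero] at hmm
      unfold CutTriangle.w
      rw [harg, ← hmm]
    unfold edgeMean
    simp_rw [hpt]
    rw [intervalIntegral.integral_const_mul, integral_ramp dd hdd.le hd1.le]
    linear_combination (-((1 - dd) / 2)) * hf3rel
  have hW2 : edgeMean c.A₁ c.A₃ c.w = (c.n 0 * (c.A₃ 0 - c.D 0) + c.n 1 * (c.A₃ 1 - c.D 1)) * (1 - ee) / 2 := by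
    have hpt : ∀ s : ℝ, c.w (c.A₁ + s • (c.A₃ - c.A₁)) = (c.n 0 * (c.A₃ 0 - c.A₁ 0) + c.n 1 * (c.A₃ 1 - c.A₁ 1)) * max (s - ee) 0 := by
      intro s
      have harg : dot c.n (c.A₁ + s • (c.A₃ - c.A₁) - c.D) = (c.n 0 * (c.A₃ 0 - c.A₁ 0) + c.n 1 * (c.A₃ 1 - c.A₁ 1)) * (s - ee) := by
        simp only [dot, Pi.add_apply, Pi.sub_apply, Pi.smul_apply, smul_eq_mul]
        linear_combination hfA1
      have hmm := mul_max_of_nonneg (s - ee) 0 (le_of_lt hqq)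
      rw [mul_zero] at hmm
      unfold CutTriangle.w
      rw [harg, ← hmm]
    unfold edgeMean
    simp_rw [hpt]
    rw [intervalIntegral.integral_const_mul, integral_ramp ee hee.le he1.le]
    linear_combination (-((1 - ee) / 2)) * hf3q
  have hW3 : edgeMean c.A₁ c.A₂ c.w = 0 := by
    unfold edgeMean
    rw [intervalIntegral.integral_congr (g := fun _ => (0:ℝ)) ?_, intervalIntegral.integral_zero]
    intro s hs
    rw [Set.uIcc_of_le (by norm_num : (0:ℝ) ≤ 1)] at hs
    unfold CutTriangle.w
    simp only
    apply max_eq_right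
    have harg : dot c.n (c.A₁ + s • (c.A₂ - c.A₁) - c.D)
        = (1 - s) * (-(ee * (c.n 0 * (c.A₃ 0 - c.A₁ 0) + c.n 1 * (c.A₃ 1 - c.A₁ 1)))) + s * (-(dd * ((c.n 0 * (c.A₃ 0 - c.A₁ 0) + c.n 1 * (c.A₃ 1 - c.A₁ 1)) - (c.n 0 * (c.A₂ 0 - c.A₁ 0) + c.n 1 * (c.A₂ 1 - c.A₁ 1))))) := by
      simp only [dot, Pi.add_apply, Pi.sub_apply, Pi.smul_apply, smul_eq_mul]
      linear_combination (1 - s) * hfA1 + s * hfA2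
    rw [harg]
    obtain ⟨hs0, hs1⟩ := hs
    linarith only [mul_nonneg (by linarith only [hs1] : (0:ℝ) ≤ 1 - s) (mul_nonneg hee.le hqq.le),
      mul_nonneg hs0 (mul_nonneg hdd.le hqp.le)]
  -- the CR interpolant of w : its normal derivative
  obtain ⟨hL1, hL2, hL3⟩ := hL
  rw [edgeMean_affine, hW1] at hL1
  rw [edgeMean_affine, hW2] at hL2
  rw [edgeMean_affine, hW3] at hL3
  simp only [dot, Pi.sub_apply] at hL1 hL2 hL3
  have hgu : g 0 * (c.A₂ 0 - c.A₁ 0) + g 1 * (c.A₂ 1 - c.A₁ 1) = (c.n 0 * (c.A₃ 0 - c.D 0) + c.n 1 * (c.A₃ 1 - c.D 1)) * (ee - dd) := by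
    linear_combination 2 * hL1 - 2 * hL2
  have hgv : g 0 * (c.A₃ 0 - c.A₁ 0) + g 1 * (c.A₃ 1 - c.A₁ 1) = (c.n 0 * (c.A₃ 0 - c.D 0) + c.n 1 * (c.A₃ 1 - c.D 1)) * (1 - dd) := by
    linear_combination 2 * hL1 - 2 * hL3
  have hgn : dot g c.n = (1 - dd) * (1 - ee) := by
    have key : (g 0 * c.n 0 + g 1 * c.n 1) *
        ((c.A₂ 0 - c.A₁ 0) * (c.A₃ 1 - c.A₁ 1) - (c.A₂ 1 - c.A₁ 1) * (c.A₃ 0 - c.A₁ 0))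
        = ((1 - dd) * (1 - ee)) *
        ((c.A₂ 0 - c.A₁ 0) * (c.A₃ 1 - c.A₁ 1) - (c.A₂ 1 - c.A₁ 1) * (c.A₃ 0 - c.A₁ 0)) := by
      linear_combination (c.n 0 * (c.A₃ 1 - c.A₁ 1) - c.n 1 * (c.A₃ 0 - c.A₁ 0)) * hgu
        - (c.n 0 * (c.A₂ 1 - c.A₁ 1) - c.n 1 * (c.A₂ 0 - c.A₁ 0)) * hgv
        + ((ee - dd) * (c.n 0 * (c.A₃ 1 - c.A₁ 1) - c.n 1 * (c.A₃ 0 - c.A₁ 0))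
            - (1 - dd) * (c.n 0 * (c.A₂ 1 - c.A₁ 1) - c.n 1 * (c.A₂ 0 - c.A₁ 0))) * hf3rel
        + (1 - dd) * (1 - ee) *
            ((c.A₂ 0 - c.A₁ 0) * (c.A₃ 1 - c.A₁ 1) - (c.A₂ 1 - c.A₁ 1) * (c.A₃ 0 - c.A₁ 0)) * h3
        + (1 - dd) * ((c.n 0 * (c.A₃ 1 - c.A₁ 1) - c.n 1 * (c.A₃ 0 - c.A₁ 0))
            - (c.n 0 * (c.A₂ 1 - c.A₁ 1) - c.n 1 * (c.A₂ 0 - c.A₁ 0))) * horth'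
    have := mul_right_cancel₀ hX key
    simpa [dot] using this
  -- identify the CR interpolant of the piecewise velocity
  have hwcont : Continuous c.w := by
    have : c.w = fun x => max (dot c.n (x - c.D)) 0 := rfl
    rw [this]
    exact (dot_sub_continuous c.n c.D).max continuous_const
  have hvt : ∀ (x : Fin 2 → ℝ) (j : Fin 2), c.vtilde Mp bp Mm bm x j
      = (Mm.mulVec x + bm) j + (α * c.w x) * c.t j := by
    intro x j
    unfold CutTriangle.vtilde
    by_cases hx : 0 ≤ dot c.n (x - c.D)
    · rw [if_pos hx]
      have hw : c.w x = dot c.n (x - c.D) := max_eq_left hx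
      rw [hMp x j, hw]
    · rw [if_neg hx]
      have hw : c.w x = 0 := max_eq_right (le_of_lt (lt_of_not_ge hx))
      rw [hw]; ring
  have hedge : ∀ (P Q : Fin 2 → ℝ) (j : Fin 2),
      edgeMean P Q (fun x => c.vtilde Mp bp Mm bm x j)
      = (dot (Mm j) P + dot (Mm j) (Q - P) / 2 + bm j) + α * c.t j * edgeMean P Q c.w := by
    intro P Q j
    unfold edgeMean
    have hrw : ∀ s : ℝ, c.vtilde Mp bp Mm bm (P + s • (Q - P)) j
        = ((dot (Mm j) P + bm j) + s * dot (Mm j) (Q - P))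
          + (α * c.t j) * c.w (P + s • (Q - P)) := by
      intro s
      rw [hvt]
      have hmv : (Mm.mulVec (P + s • (Q - P)) + bm) j
          = (dot (Mm j) P + bm j) + s * dot (Mm j) (Q - P) := by
        simp only [Pi.add_apply, mulVec_apply2, dot, Pi.sub_apply, Pi.smul_apply, smul_eq_mul]
        ring
      rw [hmv]; ring
    simp_rw [hrw]
    have hwc : Continuous fun s : ℝ => c.w (P + s • (Q - P)) :=
      hwcont.comp (continuous_const.add (continuous_id.smul continuous_const))
    have haffc : Continuous fun s : ℝ => (dot (Mm j) P + bm j) + s * dot (Mm j) (Q - P) :=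
      continuous_const.add (continuous_id.mul continuous_const)
    rw [intervalIntegral.integral_add (g := fun s : ℝ => α * c.t j * c.w (P + s • (Q - P)))
      (haffc.intervalIntegrable _ _)
      ((continuous_const.mul hwc).intervalIntegrable _ _)]
    rw [integral_affine, intervalIntegral.integral_const_mul]
    ring
  have hMπall : ∀ j : Fin 2, Mπ j 0 = Mm j 0 + α * c.t j * g 0
      ∧ Mπ j 1 = Mm j 1 + α * c.t j * g 1 ∧ bπ j = bm j + α * c.t j * b := by
    intro j
    obtain ⟨k1, k2, k3⟩ := hπ j
    rw [edgeMean_affine, hedge c.A₂ c.A₃ j, hW1] at k1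
    rw [edgeMean_affine, hedge c.A₁ c.A₃ j, hW2] at k2
    rw [edgeMean_affine, hedge c.A₁ c.A₂ j, hW3] at k3
    simp only [dot, Pi.sub_apply] at k1 k2 k3
    have hru : (Mπ j 0 - Mm j 0 - α * c.t j * g 0) * (c.A₂ 0 - c.A₁ 0)
        + (Mπ j 1 - Mm j 1 - α * c.t j * g 1) * (c.A₂ 1 - c.A₁ 1) = 0 := by
      linear_combination 2 * k1 - 2 * k2 - 2 * (α * c.t j) * hL1 + 2 * (α * c.t j) * hL2
    have hrv : (Mπ j 0 - Mm j 0 - α * c.t j * g 0) * (c.A₃ 0 - c.A₁ 0)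
        + (Mπ j 1 - Mm j 1 - α * c.t j * g 1) * (c.A₃ 1 - c.A₁ 1) = 0 := by
      linear_combination 2 * k1 - 2 * k3 - 2 * (α * c.t j) * hL1 + 2 * (α * c.t j) * hL3
    have hz0 : (Mπ j 0 - Mm j 0 - α * c.t j * g 0) *
        ((c.A₂ 0 - c.A₁ 0) * (c.A₃ 1 - c.A₁ 1) - (c.A₂ 1 - c.A₁ 1) * (c.A₃ 0 - c.A₁ 0)) = 0 := by
      linear_combination (c.A₃ 1 - c.A₁ 1) * hru - (c.A₂ 1 - c.A₁ 1) * hrv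
    have hz1 : (Mπ j 1 - Mm j 1 - α * c.t j * g 1) *
        ((c.A₂ 0 - c.A₁ 0) * (c.A₃ 1 - c.A₁ 1) - (c.A₂ 1 - c.A₁ 1) * (c.A₃ 0 - c.A₁ 0)) = 0 := by
      linear_combination (c.A₂ 0 - c.A₁ 0) * hrv - (c.A₃ 0 - c.A₁ 0) * hru
    have e0 : Mπ j 0 - Mm j 0 - α * c.t j * g 0 = 0 := (mul_eq_zero.mp hz0).resolve_right hX
    have e1 : Mπ j 1 - Mm j 1 - α * c.t j * g 1 = 0 := (mul_eq_zero.mp hz1).resolve_right hX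
    refine ⟨by linear_combination e0, by linear_combination e1, ?_⟩
    linear_combination k3 - (α * c.t j) * hL3
      - (c.A₁ 0 + (c.A₂ 0 - c.A₁ 0) / 2) * e0 - (c.A₁ 1 + (c.A₂ 1 - c.A₁ 1) / 2) * e1
  obtain ⟨hMπ00, hMπ01, hbπ0⟩ := hMπall 0
  obtain ⟨hMπ10, hMπ11, hbπ1⟩ := hMπall 1
  rw [ht0] at hMπ00 hMπ01 hbπ0
  rw [ht1] at hMπ10 hMπ11 hbπ1
  -- pass to the viscosity ratio
  set r : ℝ := μm / μp with hrdef
  have hμmr : μm = r * μp := by rw [hrdef]; field_simp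
  rw [hμmr] at hA
  have hA2 : α = 2 * (r - 1) *
      (c.n 1 * (Mm 0 0 * c.n 0 + 2⁻¹ * (Mm 0 1 + Mm 1 0) * c.n 1)
        - c.n 0 * (2⁻¹ * (Mm 0 1 + Mm 1 0) * c.n 0 + Mm 1 1 * c.n 1)) := by
    apply mul_left_cancel₀ (ne_of_gt hμp)
    linear_combination hA
  have hnum : dot c.t ((sig (r - 1) Mπ 0).mulVec c.n) = α * (1 + (r - 1) * dot g c.n) := by
    simp only [dot, sig_mulVec_apply, ht0, ht1]
    rw [hMπ00, hMπ01, hMπ10, hMπ11]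
    linear_combination (-1 : ℝ) * hA2 + (r - 1) * α * (g 0 * c.n 0 + g 1 * c.n 1) * h3
  have hs0' : (0:ℝ) ≤ (1 - dd) * (1 - ee) :=
    mul_nonneg (by linarith) (by linarith)
  have hs1' : (1 - dd) * (1 - ee) ≤ 1 := by
    linarith only [mul_nonneg hdd.le (by linarith only [he1] : (0:ℝ) ≤ 1 - ee), hee.le, hee]
  have goal1 : min 1 r ≤ 1 + (r - 1) * dot g c.n := by
    rw [hgn]
    rcases le_total 1 r with h | h
    · rw [min_eq_left h]
      have := mul_nonneg (by linarith : (0:ℝ) ≤ r - 1) hs0'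
      linarith
    · rw [min_eq_right h]
      have := mul_nonneg (by linarith : (0:ℝ) ≤ 1 - r)
        (by linarith : (0:ℝ) ≤ 1 - (1 - dd) * (1 - ee))
      linarith
  have goal2 : 0 < min 1 r := lt_min one_pos (div_pos hμm hμp)
  have hden : 0 < 1 + (r - 1) * dot g c.n := lt_of_lt_of_le goal2 goal1
  have hc2 : dot c.t ((sig (r - 1) Mπ 0).mulVec c.n) / (1 + (r - 1) * dot g c.n) = α := by
    rw [hnum]
    exact mul_div_cancel_right₀ α (ne_of_gt hden)
  have hc1 : dot c.n ((sig (μm - μp) Mπ 0).mulVec c.n) = qm - qp := by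
    simp only [dot, sig_mulVec_apply]
    rw [hMπ00, hMπ01, hMπ10, hMπ11]
    linear_combination hQ
  have hsum := area_sum c
  have hTpos := area_T_pos c
  have hTne : area c.T ≠ 0 := ne_of_gt hTpos
  have hAm : area c.Tminus = area c.T - area c.Tplus := by linarith
  refine ⟨goal1, goal2, ?_, ?_, ?_, ?_⟩
  · intro x
    funext j
    rw [hMp x j]
    simp only [Pi.add_apply, Pi.smul_apply, smul_eq_mul]
    rw [hc2]
    fin_cases j <;>
      simp only [Fin.zero_eta, Fin.mk_one, Pi.add_apply, mulVec_apply2, dot, Pi.sub_apply,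
        ht0, ht1]
    · rw [hMπ00, hMπ01, hbπ0]; ring
    · rw [hMπ10, hMπ11, hbπ1]; ring
  · intro x
    funext j
    simp only [Pi.add_apply, Pi.sub_apply, Pi.smul_apply, smul_eq_mul]
    rw [hc2]
    fin_cases j <;>
      simp only [Fin.zero_eta, Fin.mk_one, Pi.add_apply, Pi.sub_apply, mulVec_apply2, dot,
        ht0, ht1]
    · rw [hMπ00, hMπ01, hbπ0]; ring
    · rw [hMπ10, hMπ11, hbπ1]; ring
  · rw [hc1, hAm]
    field_simp
    ring
  · rw [hc1, hAm]
    field_simp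
    ring



end StokesIFE
end
end
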